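/- Let f be L-smooth convex with minimizer x⋆, and consider the SGD step x_{k+1} = x_k - δ_k G(x_k; i_k), where the stochastic oracle is unbiased (E_i G(x;i) = f'(x)) and satisfies E_i ‖G(x_k;i)‖² ≤ σ² + ‖f'(x_k)‖². Define d_{k+1} = d_k + δ_k L and e_k = (δ_k² L/2)(1 + d_{k+1}). If δ_k d_{k+1} ≥ e_k (in particular when 0 ≤ δ_k ≤ 1/L), then E_{i_k}[ d_{k+1}(f(x_{k+1}) - f(x⋆)) + (L/2)‖x_{k+1} - x⋆‖² ] ≤ d_k (f(x_k) - f(x⋆)) + (L/2)‖x_k - x⋆‖² + e_k σ². -/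

import Mathlib

/-!
The descent lemma bounds `f (xk - δ • g)` by `f xk - δ ⟪f' xk, g⟫ + L δ² ‖g‖² / 2`, and expanding
the square gives `‖xk - δ • g - xstar‖²` exactly; both are affine in `g` plus a multiple of `‖g‖²`,
so averaging over the samples replaces `g` by `f' xk` and `‖g‖²` by at most `σ² + ‖f' xk‖²`.
The first-order convexity inequality `f xk - f xstar ≤ ⟪f' xk, xk - xstar⟫` then absorbs the
cross term into the extra `δ L` of `dk + δ L`, and the step-size condition absorbs the remaining
multiple of `‖f' xk‖²`.
-/

open Finset Set AffineMap RealInnerProductSpace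

section Gradient

variable {F : Type*} [NormedAddCommGroup F] [InnerProductSpace ℝ F] [CompleteSpace F]
  {f : F → ℝ} {f' : F → F}

theorem hasDerivAt_comp_lineMap_of_hasGradientAt (hf : ∀ x, HasGradientAt f (f' x) x)
    (x y : F) (t : ℝ) :
    HasDerivAt (fun s => f (lineMap x y s)) ⟪f' (lineMap x y t), y - x⟫ t := by
  have := (hf (lineMap x y t)).hasFDerivAt.comp_hasDerivAt t hasDerivAt_lineMap
  rw [InnerProductSpace.toDual_apply_apply] at this
  exact this

theorem ConvexOn.add_inner_le_of_hasGradientAt (hconv : ConvexOn ℝ univ f)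
    (hf : ∀ x, HasGradientAt f (f' x) x) (x y : F) :
    f x + ⟪f' x, y - x⟫ ≤ f y := by
  have hline : ConvexOn ℝ univ (fun t : ℝ => f (lineMap x y t)) := by
    have := hconv.comp_affineMap (lineMap x y)
    rw [preimage_univ] at this
    exact this
  have := hline.le_slope_of_hasDerivAt (mem_univ 0) (mem_univ 1) one_pos
    (hasDerivAt_comp_lineMap_of_hasGradientAt hf x y 0)
  simp only [lineMap_apply_zero, lineMap_apply_one, slope_def_field, sub_zero, div_one] at this
  linarith

theorem le_add_inner_add_of_lipschitz_gradient {L : ℝ} (hf : ∀ x, HasGradientAt f (f' x) x)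
    (hsmooth : ∀ x y, ‖f' x - f' y‖ ≤ L * ‖x - y‖) (x y : F) :
    f y ≤ f x + ⟪f' x, y - x⟫ + L / 2 * ‖y - x‖ ^ 2 := by
  have hφ := hasDerivAt_comp_lineMap_of_hasGradientAt hf x y
  have hB (t : ℝ) : HasDerivAt (fun s => f x + s * ⟪f' x, y - x⟫ + L / 2 * s ^ 2 * ‖y - x‖ ^ 2)
      (⟪f' x, y - x⟫ + L * t * ‖y - x‖ ^ 2) t := by
    have hlin := ((hasDerivAt_id t).mul_const ⟪f' x, y - x⟫).const_add (f x)
    have hquad := ((hasDerivAt_pow 2 t).const_mul (L / 2)).mul_const (‖y - x‖ ^ 2)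
    exact (hlin.add hquad).congr_deriv (by push_cast; ring)
  have bound (t : ℝ) (ht : t ∈ Ico (0 : ℝ) 1) :
      ⟪f' (lineMap x y t), y - x⟫ ≤ ⟪f' x, y - x⟫ + L * t * ‖y - x‖ ^ 2 := by
    have hdist : ‖lineMap x y t - x‖ = t * ‖y - x‖ := by
      rw [← vsub_eq_sub, lineMap_vsub_left, norm_smul, Real.norm_of_nonneg ht.1, vsub_eq_sub]
    calc ⟪f' (lineMap x y t), y - x⟫
        = ⟪f' x, y - x⟫ + ⟪f' (lineMap x y t) - f' x, y - x⟫ := by rw [inner_sub_left]; ring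
      _ ≤ ⟪f' x, y - x⟫ + ‖f' (lineMap x y t) - f' x‖ * ‖y - x‖ := by
        gcongr; exact real_inner_le_norm _ _
      _ ≤ ⟪f' x, y - x⟫ + L * ‖lineMap x y t - x‖ * ‖y - x‖ := by gcongr; exact hsmooth _ _
      _ = ⟪f' x, y - x⟫ + L * t * ‖y - x‖ ^ 2 := by rw [hdist]; ring
  have := image_le_of_deriv_right_le_deriv_boundary
    (fun t _ => (hφ t).continuousAt.continuousWithinAt) (fun t _ => (hφ t).hasDerivWithinAt)
    (by simp) (fun t _ => (hB t).continuousAt.continuousWithinAt)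
    (fun t _ => (hB t).hasDerivWithinAt) bound (right_mem_Icc.2 zero_le_one)
  simpa using this

end Gradient

section SGD

variable {F : Type*} [NormedAddCommGroup F] [InnerProductSpace ℝ F]

theorem mean_le_of_le_sub_inner_add_mul_norm_sq {n : ℕ} (hn : 0 < n) {ψ : Fin n → ℝ}
    {G : Fin n → F} {a m : F} {c b M : ℝ} (hb : 0 ≤ b)
    (hψ : ∀ i, ψ i ≤ c - ⟪a, G i⟫ + b * ‖G i‖ ^ 2)
    (hmean : (n : ℝ)⁻¹ • ∑ i, G i = m) (hsecond : (n : ℝ)⁻¹ * ∑ i, ‖G i‖ ^ 2 ≤ M) :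
    (n : ℝ)⁻¹ * ∑ i, ψ i ≤ c - ⟪a, m⟫ + b * M := by
  have hn' : (n : ℝ) ≠ 0 := by positivity
  calc (n : ℝ)⁻¹ * ∑ i, ψ i ≤ (n : ℝ)⁻¹ * ∑ i, (c - ⟪a, G i⟫ + b * ‖G i‖ ^ 2) := by
        gcongr with i; exact hψ i
    _ = c - ⟪a, m⟫ + b * ((n : ℝ)⁻¹ * ∑ i, ‖G i‖ ^ 2) := by
        rw [← hmean, real_inner_smul_right, inner_sum]
        simp only [sum_add_distrib, sum_sub_distrib, sum_const, card_univ, Fintype.card_fin,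
          nsmul_eq_mul, ← mul_sum]
        field_simp
    _ ≤ c - ⟪a, m⟫ + b * M := by gcongr

variable [CompleteSpace F] {f : F → ℝ} {f' : F → F} {L : ℝ}

theorem sgd_step_potential_le (hf : ∀ x, HasGradientAt f (f' x) x)
    (hsmooth : ∀ x y, ‖f' x - f' y‖ ≤ L * ‖x - y‖) {D : ℝ} (hD : 0 ≤ D) (x xstar g : F)
    (δ : ℝ) :
    D * (f (x - δ • g) - f xstar) + L / 2 * ‖x - δ • g - xstar‖ ^ 2
      ≤ D * (f x - f xstar) + L / 2 * ‖x - xstar‖ ^ 2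
        - ⟪δ • (D • f' x + L • (x - xstar)), g⟫ + δ ^ 2 * L / 2 * (1 + D) * ‖g‖ ^ 2 := by
  have hdescent : f (x - δ • g) ≤ f x - δ * ⟪f' x, g⟫ + L / 2 * (δ ^ 2 * ‖g‖ ^ 2) := by
    have := le_add_inner_add_of_lipschitz_gradient hf hsmooth x (x - δ • g)
    rwa [sub_sub_cancel_left, inner_neg_right, real_inner_smul_right, norm_neg, norm_smul,
      mul_pow, Real.norm_eq_abs, sq_abs, ← sub_eq_add_neg] at this
  have hdist : ‖x - δ • g - xstar‖ ^ 2
      = ‖x - xstar‖ ^ 2 - 2 * (δ * ⟪x - xstar, g⟫) + δ ^ 2 * ‖g‖ ^ 2 := by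
    rw [sub_right_comm, norm_sub_sq_real, real_inner_smul_right, norm_smul, mul_pow,
      Real.norm_eq_abs, sq_abs]
  rw [hdist, real_inner_smul_left, inner_add_left, real_inner_smul_left, real_inner_smul_left]
  linarith [mul_le_mul_of_nonneg_left hdescent hD]

end SGD

theorem sgd_potential_decrease_general {d n : ℕ} (hn : 0 < n) (L σ : ℝ) (hL : 0 < L)
    (f : EuclideanSpace ℝ (Fin d) → ℝ)
    (f' : EuclideanSpace ℝ (Fin d) → EuclideanSpace ℝ (Fin d))
    (hgrad : ∀ x, HasGradientAt f (f' x) x)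
    (hconv : ConvexOn ℝ Set.univ f)
    (hsmooth : ∀ x y, ‖f' x - f' y‖ ≤ L * ‖x - y‖)
    (xstar : EuclideanSpace ℝ (Fin d))
    (δ dk : ℝ) (hδ : 0 ≤ δ) (hdk : 0 ≤ dk)
    (xk : EuclideanSpace ℝ (Fin d)) (G : Fin n → EuclideanSpace ℝ (Fin d))
    (hunbiased : (n : ℝ)⁻¹ • (∑ i, G i) = f' xk)
    (hsecond : (n : ℝ)⁻¹ * (∑ i, ‖G i‖ ^ 2) ≤ σ ^ 2 + ‖f' xk‖ ^ 2)
    (hstepsize : δ * (dk + δ * L) ≥ δ ^ 2 * L / 2 * (1 + (dk + δ * L))) :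
    (n : ℝ)⁻¹ * (∑ i, ((dk + δ * L) * (f (xk - δ • G i) - f xstar)
        + L / 2 * ‖(xk - δ • G i) - xstar‖ ^ 2))
      ≤ dk * (f xk - f xstar) + L / 2 * ‖xk - xstar‖ ^ 2
        + (δ ^ 2 * L / 2 * (1 + (dk + δ * L))) * σ ^ 2 := by
  have hD : 0 ≤ dk + δ * L := by positivity
  have havg := mean_le_of_le_sub_inner_add_mul_norm_sq hn (by positivity)
    (fun i => sgd_step_potential_le hgrad hsmooth hD xk xstar (G i) δ) hunbiased hsecond
  have hconvex : f xk - f xstar ≤ ⟪f' xk, xk - xstar⟫ := by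
    have := hconv.add_inner_le_of_hasGradientAt hgrad xk xstar
    rw [← neg_sub, inner_neg_right] at this
    linarith
  rw [real_inner_smul_left, inner_add_left, real_inner_smul_left, real_inner_smul_left,
    real_inner_self_eq_norm_sq, real_inner_comm] at havg
  linarith [mul_le_mul_of_nonneg_left hconvex (by positivity : 0 ≤ δ * L),
    mul_le_mul_of_nonneg_right hstepsize (sq_nonneg ‖f' xk‖)]

/-- One-step potential inequality for SGD under a bounded-variance-type
second moment bound. -/
theorem sgd_potential_decrease {d n : ℕ} (hn : 0 < n) (L σ : ℝ) (hL : 0 < L)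
    (f : EuclideanSpace ℝ (Fin d) → ℝ)
    (f' : EuclideanSpace ℝ (Fin d) → EuclideanSpace ℝ (Fin d))
    (hgrad : ∀ x, HasGradientAt f (f' x) x)
    (hconv : ConvexOn ℝ Set.univ f)
    (hsmooth : ∀ x y, ‖f' x - f' y‖ ≤ L * ‖x - y‖)
    (xstar : EuclideanSpace ℝ (Fin d)) (hmin : ∀ y, f xstar ≤ f y)
    (δ dk : ℝ) (hδ : 0 ≤ δ) (hdk : 0 ≤ dk)
    (xk : EuclideanSpace ℝ (Fin d)) (G : Fin n → EuclideanSpace ℝ (Fin d))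
    (hunbiased : (n : ℝ)⁻¹ • (∑ i, G i) = f' xk)
    (hsecond : (n : ℝ)⁻¹ * (∑ i, ‖G i‖ ^ 2) ≤ σ ^ 2 + ‖f' xk‖ ^ 2)
    (hstepsize : δ * (dk + δ * L) ≥ δ ^ 2 * L / 2 * (1 + (dk + δ * L))) :
    (n : ℝ)⁻¹ * (∑ i, ((dk + δ * L) * (f (xk - δ • G i) - f xstar)
        + L / 2 * ‖(xk - δ • G i) - xstar‖ ^ 2))
      ≤ dk * (f xk - f xstar) + L / 2 * ‖xk - xstar‖ ^ 2
        + (δ ^ 2 * L / 2 * (1 + (dk + δ * L))) * σ ^ 2 :=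
  sgd_potential_decrease_general hn L σ hL f f' hgrad hconv hsmooth xstar δ dk hδ hdk xk G hunbiased
    hsecond hstepsize
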